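/- For every LTL formula φ and every alternating LTL formula γ, the equivalence φ U γ ≡ γ holds, i.e., for every alphabet Σ and every infinite word w ∈ Σ^ω, w ⊨ φ U γ if and only if w ⊨ γ. -/
import Mathlib


/-- Syntax of LTL formulae over atomic propositions `AP`. -/
inductive LTL (AP : Type) : Type
  | tt    : LTL AP
  | atom  : AP → LTL AP
  | not   : LTL AP → LTL AP
  | or    : LTL AP → LTL AP → LTL AP
  | and   : LTL AP → LTL AP → LTL AP
  | next  : LTL AP → LTL AP
  | untl  : LTL AP → LTL AP → LTL AP

namespace LTL

/-- Derived operator `F` (eventually). -/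
def F {AP : Type} (φ : LTL AP) : LTL AP := untl tt φ

/-- Derived operator `G` (always). -/
def G {AP : Type} (φ : LTL AP) : LTL AP := not (F (not φ))

/-- Derived operator `R` (release). -/
def R {AP : Type} (φ ψ : LTL AP) : LTL AP := not (untl (not φ) (not ψ))

end LTL

/-- The `k`-th suffix of an infinite word. -/
def suffix {AP : Type} (w : ℕ → Set AP) (k : ℕ) : ℕ → Set AP :=
  fun i => w (i + k)

/-- Concatenation of a finite word `u` with an infinite word `w`. -/
def cat {AP : Type} (u : List (Set AP)) (w : ℕ → Set AP) : ℕ → Set AP :=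
  fun i => if h : i < u.length then u.get ⟨i, h⟩ else w (i - u.length)

/-- Satisfaction relation `w ⊨ φ` of LTL over infinite words `w : ℕ → Set AP`. -/
def Sat {AP : Type} : LTL AP → (ℕ → Set AP) → Prop
  | .tt, _ => True
  | .atom a, w => a ∈ w 0
  | .not φ, w => ¬ Sat φ w
  | .or φ ψ, w => Sat φ w ∨ Sat ψ w
  | .and φ ψ, w => Sat φ w ∧ Sat ψ w
  | .next φ, w => Sat φ (suffix w 1)
  | .untl φ ψ, w => ∃ i, Sat ψ (suffix w i) ∧ ∀ j < i, Sat φ (suffix w j)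

/-- Pure eventuality formulae: μ ::= Fφ | μ∨μ | μ∧μ | Xμ | φUμ | μRμ | Gμ. -/
inductive PureEventuality {AP : Type} : LTL AP → Prop
  | fin (φ : LTL AP) : PureEventuality (LTL.F φ)
  | or {μ₁ μ₂ : LTL AP} : PureEventuality μ₁ → PureEventuality μ₂ →
      PureEventuality (LTL.or μ₁ μ₂)
  | and {μ₁ μ₂ : LTL AP} : PureEventuality μ₁ → PureEventuality μ₂ →
      PureEventuality (LTL.and μ₁ μ₂)
  | next {μ : LTL AP} : PureEventuality μ → PureEventuality (LTL.next μ)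
  | untl (φ : LTL AP) {μ : LTL AP} : PureEventuality μ →
      PureEventuality (LTL.untl φ μ)
  | rel {μ₁ μ₂ : LTL AP} : PureEventuality μ₁ → PureEventuality μ₂ →
      PureEventuality (LTL.R μ₁ μ₂)
  | glob {μ : LTL AP} : PureEventuality μ → PureEventuality (LTL.G μ)

/-- Pure universality formulae: ν ::= Gφ | ν∨ν | ν∧ν | Xν | νUν | φRν | Fν. -/
inductive PureUniversality {AP : Type} : LTL AP → Prop
  | glob (φ : LTL AP) : PureUniversality (LTL.G φ)
  | or {ν₁ ν₂ : LTL AP} : PureUniversality ν₁ → PureUniversality ν₂ →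
      PureUniversality (LTL.or ν₁ ν₂)
  | and {ν₁ ν₂ : LTL AP} : PureUniversality ν₁ → PureUniversality ν₂ →
      PureUniversality (LTL.and ν₁ ν₂)
  | next {ν : LTL AP} : PureUniversality ν → PureUniversality (LTL.next ν)
  | untl {ν₁ ν₂ : LTL AP} : PureUniversality ν₁ → PureUniversality ν₂ →
      PureUniversality (LTL.untl ν₁ ν₂)
  | rel (φ : LTL AP) {ν : LTL AP} : PureUniversality ν →
      PureUniversality (LTL.R φ ν)
  | fin {ν : LTL AP} : PureUniversality ν → PureUniversality (LTL.F ν)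

/-- Alternating formulae: ξ ::= Gμ | Fν | ξ∨ξ | ξ∧ξ | Xξ | φUξ | φRξ | Fξ | Gξ. -/
inductive Alternating {AP : Type} : LTL AP → Prop
  | globEv {μ : LTL AP} : PureEventuality μ → Alternating (LTL.G μ)
  | finUniv {ν : LTL AP} : PureUniversality ν → Alternating (LTL.F ν)
  | or {ξ₁ ξ₂ : LTL AP} : Alternating ξ₁ → Alternating ξ₂ →
      Alternating (LTL.or ξ₁ ξ₂)
  | and {ξ₁ ξ₂ : LTL AP} : Alternating ξ₁ → Alternating ξ₂ →
      Alternating (LTL.and ξ₁ ξ₂)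
  | next {ξ : LTL AP} : Alternating ξ → Alternating (LTL.next ξ)
  | untl (φ : LTL AP) {ξ : LTL AP} : Alternating ξ → Alternating (LTL.untl φ ξ)
  | rel (φ : LTL AP) {ξ : LTL AP} : Alternating ξ → Alternating (LTL.R φ ξ)
  | fin {ξ : LTL AP} : Alternating ξ → Alternating (LTL.F ξ)
  | glob {ξ : LTL AP} : Alternating ξ → Alternating (LTL.G ξ)


section Aux
open Classical

lemma suffix_suffix {AP : Type} (w : ℕ → Set AP) (a b : ℕ) :
    suffix (suffix w a) b = suffix w (b + a) := by
  funext i; simp [suffix, Nat.add_assoc]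

lemma suffix_zero {AP : Type} (w : ℕ → Set AP) : suffix w 0 = w := by
  funext i; simp [suffix]

lemma sat_G {AP : Type} (φ : LTL AP) (w : ℕ → Set AP) :
    Sat (LTL.G φ) w ↔ ∀ i, Sat φ (suffix w i) := by
  simp [LTL.G, LTL.F, Sat]

lemma sat_R {AP : Type} (φ ψ : LTL AP) (w : ℕ → Set AP) :
    Sat (LTL.R φ ψ) w ↔ ∀ i, Sat ψ (suffix w i) ∨ ∃ j < i, Sat φ (suffix w j) := by
  simp only [LTL.R, Sat]
  push_neg
  exact forall_congr' fun i => by tauto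

/-- Pure eventuality formulae transfer from a suffix back to the whole word. -/
lemma pe_back {AP : Type} {μ : LTL AP} (h : PureEventuality μ) :
    ∀ (w : ℕ → Set AP) (k : ℕ), Sat μ (suffix w k) → Sat μ w := by
  induction h with
  | fin φ =>
      intro w k hs
      obtain ⟨i, hi, -⟩ := hs
      rw [suffix_suffix] at hi
      exact ⟨i + k, hi, fun j _ => trivial⟩
  | or h1 h2 ih1 ih2 =>
      intro w k hs
      exact hs.imp (ih1 w k) (ih2 w k)
  | and h1 h2 ih1 ih2 =>
      intro w k hs
      exact ⟨ih1 w k hs.1, ih2 w k hs.2⟩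
  | next h ih =>
      intro w k hs
      have : suffix (suffix w k) 1 = suffix (suffix w 1) k := by
        rw [suffix_suffix, suffix_suffix, Nat.add_comm]
      exact ih (suffix w 1) k (this ▸ hs)
  | untl φ h ih =>
      intro w k hs
      obtain ⟨i, hi, -⟩ := hs
      rw [suffix_suffix] at hi
      have := ih w (i + k) hi
      exact ⟨0, by rwa [suffix_zero], fun j hj => absurd hj (Nat.not_lt_zero j)⟩
  | rel h1 h2 ih1 ih2 =>
      rename_i μ₁ μ₂
      intro w k hs
      rw [sat_R] at hs ⊢
      have hμ2 : Sat μ₂ w := by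
        rcases hs 0 with h | ⟨j, hj, -⟩
        · exact ih2 w k (by rwa [suffix_zero] at h)
        · exact absurd hj (Nat.not_lt_zero j)
      by_cases hc : ∃ i, Sat μ₁ (suffix (suffix w k) i)
      · obtain ⟨i, hi⟩ := hc
        rw [suffix_suffix] at hi
        have hμ1 : Sat μ₁ w := ih1 w (i + k) hi
        intro i
        rcases Nat.eq_zero_or_pos i with rfl | hpos
        · exact Or.inl (by rwa [suffix_zero])
        · exact Or.inr ⟨0, hpos, by rwa [suffix_zero]⟩
      · push_neg at hc
        intro i
        left
        have hall : Sat μ₂ (suffix w (i + k)) := by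
          rcases hs i with h | ⟨j, _, hj⟩
          · rwa [suffix_suffix] at h
          · exact absurd hj (hc j)
        refine ih2 (suffix w i) k ?_
        rw [suffix_suffix, Nat.add_comm]
        exact hall
  | glob h ih =>
      intro w k hs
      rw [sat_G] at hs ⊢
      intro i
      have := hs i
      rw [suffix_suffix] at this
      have heq : suffix w (i + k) = suffix (suffix w i) k := by
        rw [suffix_suffix, Nat.add_comm]
      exact ih (suffix w i) k (heq ▸ this)

/-- Pure universality formulae transfer from the whole word to any suffix. -/
lemma pu_fwd {AP : Type} {ν : LTL AP} (h : PureUniversality ν) :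
    ∀ (w : ℕ → Set AP) (k : ℕ), Sat ν w → Sat ν (suffix w k) := by
  induction h with
  | glob φ =>
      intro w k hs
      rw [sat_G] at hs ⊢
      intro i
      rw [suffix_suffix]
      exact hs (i + k)
  | or h1 h2 ih1 ih2 =>
      intro w k hs
      exact hs.imp (ih1 w k) (ih2 w k)
  | and h1 h2 ih1 ih2 =>
      intro w k hs
      exact ⟨ih1 w k hs.1, ih2 w k hs.2⟩
  | next h ih =>
      rename_i ν
      intro w k hs
      show Sat ν (suffix (suffix w k) 1)
      have heq : suffix (suffix w k) 1 = suffix (suffix w 1) k := by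
        rw [suffix_suffix, suffix_suffix, Nat.add_comm]
      rw [heq]
      exact ih (suffix w 1) k hs
  | untl h1 h2 ih1 ih2 =>
      intro w k hs
      obtain ⟨i, hi, hpre⟩ := hs
      refine ⟨i, ?_, fun j hj => ?_⟩
      · rw [suffix_suffix, Nat.add_comm i k, ← suffix_suffix w i k]
        exact ih2 (suffix w i) k hi
      · rw [suffix_suffix, Nat.add_comm, ← suffix_suffix w j k]
        exact ih1 (suffix w j) k (hpre j hj)
  | rel φ h ih =>
      rename_i ν'
      intro w k hs
      rw [sat_R] at hs ⊢
      have hν : Sat ν' w := by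
        rcases hs 0 with h' | ⟨j, hj, -⟩
        · rwa [suffix_zero] at h'
        · exact absurd hj (Nat.not_lt_zero j)
      intro i
      left
      rw [suffix_suffix]
      exact ih w (i + k) hν
  | fin h ih =>
      intro w k hs
      obtain ⟨i, hi, -⟩ := hs
      refine ⟨i, ?_, fun j _ => trivial⟩
      rw [suffix_suffix, Nat.add_comm i k, ← suffix_suffix w i k]
      exact ih (suffix w i) k hi

/-- Alternating formulae are prefix-independent. -/
lemma alt_shift {AP : Type} {ξ : LTL AP} (h : Alternating ξ) :
    ∀ (w : ℕ → Set AP) (k : ℕ), Sat ξ (suffix w k) ↔ Sat ξ w := by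
  induction h with
  | globEv hμ =>
      intro w k
      rw [sat_G, sat_G]
      constructor
      · intro hs i
        have := hs i
        rw [suffix_suffix] at this
        have heq : suffix w (i + k) = suffix (suffix w i) k := by
          rw [suffix_suffix, Nat.add_comm]
        exact pe_back hμ (suffix w i) k (heq ▸ this)
      · intro hs i
        rw [suffix_suffix]
        exact hs (i + k)
  | finUniv hν =>
      intro w k
      constructor
      · intro hs
        obtain ⟨i, hi, -⟩ := hs
        rw [suffix_suffix] at hi
        exact ⟨i + k, hi, fun j _ => trivial⟩
      · intro hs
        obtain ⟨i, hi, -⟩ := hs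
        refine ⟨i, ?_, fun j _ => trivial⟩
        rw [suffix_suffix, Nat.add_comm i k, ← suffix_suffix w i k]
        exact pu_fwd hν (suffix w i) k hi
  | or h1 h2 ih1 ih2 =>
      intro w k
      exact or_congr (ih1 w k) (ih2 w k)
  | and h1 h2 ih1 ih2 =>
      intro w k
      exact and_congr (ih1 w k) (ih2 w k)
  | next h ih =>
      intro w k
      show Sat _ (suffix (suffix w k) 1) ↔ Sat _ (suffix w 1)
      have : suffix (suffix w k) 1 = suffix (suffix w 1) k := by
        rw [suffix_suffix, suffix_suffix, Nat.add_comm]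
      rw [this]
      exact ih (suffix w 1) k
  | untl φ h ih =>
      rename_i ξ'
      intro w k
      have key : ∀ v : ℕ → Set AP, Sat (LTL.untl φ ξ') v ↔ Sat ξ' v := by
        intro v
        constructor
        · rintro ⟨i, hi, -⟩
          exact (ih v i).mp hi
        · intro hv
          exact ⟨0, by rwa [suffix_zero], fun j hj => absurd hj (Nat.not_lt_zero j)⟩
      rw [key, key]
      exact ih w k
  | rel φ h ih =>
      rename_i ξ'
      intro w k
      have key : ∀ v : ℕ → Set AP, Sat (LTL.R φ ξ') v ↔ Sat ξ' v := by
        intro v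
        rw [sat_R]
        constructor
        · intro hs
          rcases hs 0 with h' | ⟨j, hj, -⟩
          · rwa [suffix_zero] at h'
          · exact absurd hj (Nat.not_lt_zero j)
        · intro hv i
          exact Or.inl ((ih _ i).mpr hv)
      rw [key, key]
      exact ih w k
  | fin h ih =>
      rename_i ξ'
      intro w k
      have key : ∀ v : ℕ → Set AP, Sat (LTL.F ξ') v ↔ Sat ξ' v := by
        intro v
        constructor
        · rintro ⟨i, hi, -⟩
          exact (ih v i).mp hi
        · intro hv
          exact ⟨0, by rwa [suffix_zero], fun j _ => trivial⟩
      rw [key, key]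
      exact ih w k
  | glob h ih =>
      rename_i ξ'
      intro w k
      have key : ∀ v : ℕ → Set AP, Sat (LTL.G ξ') v ↔ Sat ξ' v := by
        intro v
        rw [sat_G]
        constructor
        · intro hs
          have := hs 0
          rwa [suffix_zero] at this
        · intro hv i
          exact (ih v i).mpr hv
      rw [key, key]
      exact ih w k

end Aux

theorem until_alternating_equiv :
    ∀ (AP : Type) (φ γ : LTL AP), Alternating γ →
      ∀ (w : ℕ → Set AP), Sat (LTL.untl φ γ) w ↔ Sat γ w := by
  intro AP φ γ hγ w
  constructor
  · rintro ⟨i, hi, -⟩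
    exact (alt_shift hγ w i).mp hi
  · intro hγw
    exact ⟨0, by rwa [suffix_zero], fun j hj => absurd hj (Nat.not_lt_zero j)⟩
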